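/- Let (X,d) be a metric space without isolated points and let f_{1,∞} be a finitely generated NADS on X such that: (1) f_{1,∞} is topologically transitive; (2) the set Per(f_{1,∞}) of periodic points is dense in X; (3) there exist two invariant periodic points x, y ∈ X with orb(x, f_{1,∞}) ∩ orb(y, f_{1,∞}) = ∅. Then f_{1,∞} is sensitive. -/
import Mathlib


/-- `nadsComp f n = f_1^{(n)} = f_n ∘ f_{n-1} ∘ ⋯ ∘ f_1` for a 1-indexed sequence of maps
(`f i` is the map `f_i`; the value of `f 0` is irrelevant). -/
def nadsComp {X : Type*} (f : ℕ → X → X) : ℕ → X → X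
  | 0 => id
  | n + 1 => f (n + 1) ∘ nadsComp f n

/-- The orbit `orb(x, f_{1,∞}) = {f_1^{(n)}(x) : n ≥ 0}`. -/
def nadsOrbit {X : Type*} (f : ℕ → X → X) (x : X) : Set X :=
  Set.range fun n : ℕ => nadsComp f n x

/-- `x` is a periodic point of the NADS `f_{1,∞}`:
there is `n ≥ 1` with `f_1^{(nk)}(x) = x` for all `k ≥ 0`. -/
def IsNadsPeriodicPt {X : Type*} (f : ℕ → X → X) (x : X) : Prop :=
  ∃ n : ℕ, 1 ≤ n ∧ ∀ k : ℕ, nadsComp f (n * k) x = x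

/-- Segment composition `f_{j+k} ∘ ⋯ ∘ f_{j+1}`. -/
def segComp {X : Type*} (f : ℕ → X → X) (j : ℕ) : ℕ → X → X
  | 0 => id
  | k + 1 => f (j + k + 1) ∘ segComp f j k

lemma nadsComp_add' {X : Type*} (f : ℕ → X → X) (j k : ℕ) (x : X) :
    nadsComp f (j + k) x = segComp f j k (nadsComp f j x) := by
  induction k with
  | zero => rfl
  | succ k ih =>
    show nadsComp f ((j + k) + 1) x = segComp f j (k + 1) (nadsComp f j x)
    simp only [nadsComp, segComp, Function.comp_apply, ih]

lemma segComp_cont {X : Type*} [MetricSpace X] (f : ℕ → X → X)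
    (hcont : ∀ i : ℕ, 1 ≤ i → Continuous (f i)) (j k : ℕ) :
    Continuous (segComp f j k) := by
  induction k with
  | zero => exact continuous_id
  | succ k ih => exact (hcont (j + k + 1) (by omega)).comp ih

lemma segComp_mem {X : Type*} (f : ℕ → X → X) (A : Set X)
    (hA : ∀ i : ℕ, 1 ≤ i → ∀ a ∈ A, f i a ∈ A) (j k : ℕ) (a : X) (ha : a ∈ A) :
    segComp f j k a ∈ A := by
  induction k with
  | zero => exact ha
  | succ k ih => exact hA (j + k + 1) (by omega) _ ih

lemma gset_finite {X : Type*} (f : ℕ → X → X)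
    (hfin : {g : X → X | ∃ i : ℕ, 1 ≤ i ∧ f i = g}.Finite) (m : ℕ) :
    {g : X → X | ∃ j k, k ≤ m ∧ g = segComp f j k}.Finite := by
  induction m with
  | zero =>
    apply Set.Finite.subset (Set.finite_singleton (id : X → X))
    rintro g ⟨j, k, hk, rfl⟩
    have : k = 0 := by omega
    subst this
    rfl
  | succ m ih =>
    apply Set.Finite.subset (ih.union (Set.Finite.image2 (· ∘ ·) hfin ih))
    rintro g ⟨j, k, hk, rfl⟩
    rcases Nat.lt_or_ge k (m + 1) with h | h
    · exact Or.inl ⟨j, k, by omega, rfl⟩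
    · have hk' : k = m + 1 := by omega
      subst hk'
      exact Or.inr ⟨f (j + m + 1), ⟨j + m + 1, by omega, rfl⟩,
        segComp f j m, ⟨j, m, le_refl _, rfl⟩, rfl⟩

lemma nads_orbit_finite {X : Type*} (f : ℕ → X → X)
    (hfin : {g : X → X | ∃ i : ℕ, 1 ≤ i ∧ f i = g}.Finite) (p : X)
    (hp : IsNadsPeriodicPt f p) : (nadsOrbit f p).Finite := by
  obtain ⟨n, hn, hper⟩ := hp
  apply Set.Finite.subset ((gset_finite f hfin (n - 1)).image (fun g => g p))
  rintro _ ⟨m, rfl⟩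
  have h2 := Nat.div_add_mod m n
  have h3 : m % n < n := Nat.mod_lt _ hn
  refine ⟨segComp f (n * (m / n)) (m % n), ⟨n * (m / n), m % n, by omega, rfl⟩, ?_⟩
  show segComp f (n * (m / n)) (m % n) p = nadsComp f m p
  calc segComp f (n * (m / n)) (m % n) p
      = segComp f (n * (m / n)) (m % n) (nadsComp f (n * (m / n)) p) := by rw [hper]
    _ = nadsComp f (n * (m / n) + m % n) p := (nadsComp_add' f _ _ p).symm
    _ = nadsComp f m p := by rw [h2]

lemma exists_pad (n k : ℕ) (hn : 1 ≤ n) : ∃ r j, r + 1 ≤ n ∧ k + r = n * j := by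
  have h2 := Nat.div_add_mod k n
  rcases Nat.eq_zero_or_pos (k % n) with h | h
  · exact ⟨0, k / n, hn, by omega⟩
  · have h3 : k % n < n := Nat.mod_lt _ hn
    have h4 : n * (k / n + 1) = n * (k / n) + n := Nat.mul_succ n _
    exact ⟨n - k % n, k / n + 1, by omega, by omega⟩

/-- Banks' theorem for NADS: a finitely generated, topologically transitive NADS on a metric
space without isolated points, with dense periodic points and two invariant periodic points
having disjoint orbits, is sensitive. -/
theorem banks_theorem_for_nads {X : Type*} [MetricSpace X]
    (hX : ∀ x : X, Filter.NeBot (nhdsWithin x {x}ᶜ))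
    (f : ℕ → X → X) (hcont : ∀ i : ℕ, 1 ≤ i → Continuous (f i))
    (hfin : {g : X → X | ∃ i : ℕ, 1 ≤ i ∧ f i = g}.Finite)
    (htrans : ∀ U V : Set X, IsOpen U → IsOpen V → U.Nonempty → V.Nonempty →
      ∃ n : ℕ, (nadsComp f n '' U ∩ V).Nonempty)
    (hper : Dense {x : X | IsNadsPeriodicPt f x})
    (hxy : ∃ x y : X, IsNadsPeriodicPt f x ∧ IsNadsPeriodicPt f y ∧
      (∀ i : ℕ, 1 ≤ i → f i '' nadsOrbit f x ⊆ nadsOrbit f x) ∧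
      (∀ i : ℕ, 1 ≤ i → f i '' nadsOrbit f y ⊆ nadsOrbit f y) ∧
      nadsOrbit f x ∩ nadsOrbit f y = ∅) :
    ∃ ε : ℝ, 0 < ε ∧ ∀ x : X, ∀ δ : ℝ, 0 < δ →
      ∃ y : X, ∃ n : ℕ, dist x y < δ ∧ ε ≤ dist (nadsComp f n x) (nadsComp f n y) := by
  classical
  obtain ⟨x0, y0, hx0, hy0, hxinv, hyinv, hdisj⟩ := hxy
  set A := nadsOrbit f x0 with hA
  set B := nadsOrbit f y0 with hB
  have hAfin : A.Finite := nads_orbit_finite f hfin x0 hx0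
  have hBfin : B.Finite := nads_orbit_finite f hfin y0 hy0
  have hx0A : x0 ∈ A := ⟨0, rfl⟩
  have hy0B : y0 ∈ B := ⟨0, rfl⟩
  obtain ⟨⟨a0, b0⟩, hab, hmin⟩ := Finset.exists_min_image (hAfin.toFinset ×ˢ hBfin.toFinset)
    (fun ab => dist ab.1 ab.2)
    ⟨(x0, y0), by simp [Finset.mem_product, hAfin.mem_toFinset, hBfin.mem_toFinset, hx0A, hy0B]⟩
  rw [Finset.mem_product, hAfin.mem_toFinset, hBfin.mem_toFinset] at hab
  obtain ⟨ha0, hb0⟩ := hab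
  set ε0 := dist a0 b0 with hε0
  have hε0pos : 0 < ε0 := by
    rw [hε0, dist_pos]
    rintro rfl
    have : a0 ∈ A ∩ B := ⟨ha0, hb0⟩
    rw [hdisj] at this
    exact this
  have hminAB : ∀ a ∈ A, ∀ b ∈ B, ε0 ≤ dist a b := by
    intro a ha b hb
    refine hmin (a, b) ?_
    rw [Finset.mem_product, hAfin.mem_toFinset, hBfin.mem_toFinset]
    exact ⟨ha, hb⟩
  set ε := ε0 / 8 with hε
  refine ⟨ε, by positivity, ?_⟩
  intro u δ hδ
  set δ' := min δ ε with hδ'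
  have hδ'pos : 0 < δ' := lt_min hδ (by positivity)
  have hfar : (∀ c ∈ A, 4 * ε ≤ dist u c) ∨ (∀ c ∈ B, 4 * ε ≤ dist u c) := by
    by_contra h
    push_neg at h
    obtain ⟨⟨a, haA, ha⟩, ⟨b, hbB, hb⟩⟩ := h
    have h1 : ε0 ≤ dist a b := hminAB a haA b hbB
    have h2 : dist a b ≤ dist a u + dist u b := dist_triangle a u b
    have h3 : dist a u = dist u a := dist_comm a u
    rw [hε] at ha hb
    linarith
  obtain ⟨Q, hQinv, ⟨q, hqQ⟩, hQfar⟩ :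
      ∃ Q : Set X, (∀ i : ℕ, 1 ≤ i → ∀ a ∈ Q, f i a ∈ Q) ∧ Q.Nonempty ∧
        ∀ c ∈ Q, 4 * ε ≤ dist u c := by
    rcases hfar with h | h
    · exact ⟨A, fun i hi a ha => hxinv i hi ⟨a, ha, rfl⟩, ⟨x0, hx0A⟩, h⟩
    · exact ⟨B, fun i hi a ha => hyinv i hi ⟨a, ha, rfl⟩, ⟨y0, hy0B⟩, h⟩
  obtain ⟨p, hp, hup⟩ := hper.exists_dist_lt u hδ'pos
  obtain ⟨n, hn1, hpn⟩ := hp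
  set G : Set (X → X) := {g | ∃ j k, k ≤ n - 1 ∧ g = segComp f j k} with hG
  have hGfin : G.Finite := gset_finite f hfin (n - 1)
  set N : Set X := ⋃ c ∈ Q, Metric.ball c ε with hN
  have hNopen : IsOpen N := isOpen_biUnion fun _ _ => Metric.isOpen_ball
  set W : Set X := ⋂ g ∈ G, g ⁻¹' N with hW
  have hWopen : IsOpen W := hGfin.isOpen_biInter fun g hg => by
    obtain ⟨j, k, hk, rfl⟩ := hg
    exact hNopen.preimage (segComp_cont f hcont j k)
  have hqW : q ∈ W := by
    refine Set.mem_iInter₂.2 fun g hg => ?_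
    obtain ⟨j, k, hk, rfl⟩ := hg
    have hmemQ : segComp f j k q ∈ Q := segComp_mem f Q hQinv j k q hqQ
    exact Set.mem_biUnion hmemQ (Metric.mem_ball_self (by positivity))
  obtain ⟨k, v, ⟨w, hwU, rfl⟩, hvW⟩ := htrans (Metric.ball u δ') W Metric.isOpen_ball hWopen
    ⟨u, Metric.mem_ball_self hδ'pos⟩ ⟨q, hqW⟩
  obtain ⟨r, j, hrn, hkr⟩ := exists_pad n k hn1
  have hmp : nadsComp f (n * j) p = p := hpn j
  have hmw : nadsComp f (n * j) w = segComp f k r (nadsComp f k w) := by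
    rw [← hkr]; exact nadsComp_add' f k r w
  have hgG : segComp f k r ∈ G := ⟨k, r, by omega, rfl⟩
  have hvN : segComp f k r (nadsComp f k w) ∈ N := Set.mem_iInter₂.1 hvW _ hgG
  obtain ⟨c, hcQ, hc⟩ := Set.mem_iUnion₂.1 hvN
  rw [Metric.mem_ball] at hc
  have hfar4 : 4 * ε ≤ dist u c := hQfar c hcQ
  have hupε : dist u p < ε := lt_of_lt_of_le hup (min_le_right _ _)
  have key : 2 * ε ≤ dist (nadsComp f (n * j) p) (nadsComp f (n * j) w) := by
    rw [hmp, hmw]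
    have t1 : dist u c ≤ dist u p + dist p (segComp f k r (nadsComp f k w)) +
        dist (segComp f k r (nadsComp f k w)) c := dist_triangle4 u p _ c
    linarith
  rcases le_or_gt ε (dist (nadsComp f (n * j) u) (nadsComp f (n * j) p)) with h | h
  · exact ⟨p, n * j, hup.trans_le (min_le_left _ _), h⟩
  · refine ⟨w, n * j, ?_, ?_⟩
    · have hw : dist w u < δ' := Metric.mem_ball.1 hwU
      rw [dist_comm] at hw
      exact hw.trans_le (min_le_left _ _)
    · have t := dist_triangle (nadsComp f (n * j) p) (nadsComp f (n * j) u)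
        (nadsComp f (n * j) w)
      have hcomm : dist (nadsComp f (n * j) p) (nadsComp f (n * j) u)
          = dist (nadsComp f (n * j) u) (nadsComp f (n * j) p) := dist_comm _ _
      linarith
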